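/- arXiv:1111.3482 — 2 statements merged into one kernel-verified Lean document; each statement's English description precedes it below -/
import Mathlib

section
/- If a continuous surjection f on a compact metric space Λ has the specification property, then the shift homeomorphism f̂ on the inverse limit Λ̂ also has the specification property. -/
/-!
Fix `N` with `2⁻¹ ^ N` small. Coordinate `i < N` of `F^[t] ŷ` is `f^[N + t - i] (ŷ N)`, so a point
`x ∈ Λ` that shadows the coordinate-`N` orbits of the specification, each stretched by `N` extra
steps, controls the first `N` coordinates of any backward orbit `ŷ` through `ŷ N = x`; the tail of
`invDist` costs at most `2 * 2⁻¹ ^ N` because `Λ` has diameter at most `1`. Backward orbits exist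
by surjectivity of `f`; through a point of period `q` they can be chosen among points of period `q`,
which makes them `q`-periodic for the shift.
-/

abbrev InvLim {X : Type*} (f : X → X) : Type _ := {x : ℕ → X // ∀ i, f (x (i + 1)) = x i}

noncomputable def invDist {X : Type*} [MetricSpace X] {f : X → X}
    (x y : InvLim f) : ℝ :=
  ∑' i : ℕ, dist (x.1 i) (y.1 i) / 2 ^ i

/-- Specification property for a map `f` on a space with distance `d`: for every `ε > 0`
there is a spacing `M(ε)` such that every `M(ε)`-spaced specification — a finite family of
orbit segments, with `P i` the initial point of the `i`-th segment `[a i, b i]` — is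
`ε`-shadowed by a point, and for every `q ≥ M(ε) + (b_m − a_0)` by a period-`q` orbit. -/
def HasSpecification {X : Type*} (d : X → X → ℝ) (f : X → X) : Prop :=
  ∀ ε > (0 : ℝ), ∃ M : ℕ, ∀ (m : ℕ) (a b : Fin (m + 1) → ℕ) (P : Fin (m + 1) → X),
    (∀ i, a i ≤ b i) →
    (∀ i : Fin m, b i.castSucc + M < a i.succ) →
    ((∃ x : X, ∀ (i : Fin (m + 1)) (t : ℕ), a i ≤ t → t ≤ b i →
        d (f^[t] x) (f^[t - a i] (P i)) < ε) ∧
      ∀ q : ℕ, M + (b (Fin.last m) - a 0) ≤ q →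
        ∃ x : X, f^[q] x = x ∧ ∀ (i : Fin (m + 1)) (t : ℕ), a i ≤ t → t ≤ b i →
          d (f^[t] x) (f^[t - a i] (P i)) < ε)

open Set Function

namespace InvLim

variable {X : Type*} {f : X → X}

theorem iterate_apply_add (x : InvLim f) (n k : ℕ) : f^[k] (x.1 (n + k)) = x.1 n := by
  induction k with
  | zero => rfl
  | succ k ih => rw [iterate_succ_apply, ← add_assoc, x.2, ih]

theorem exists_of_surjOn {s : Set X} (hs : SurjOn f s s) {x : X} (hx : x ∈ s) :
    ∃ z : InvLim f, z.1 0 = x ∧ ∀ i, z.1 i ∈ s := by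
  have : Nonempty X := ⟨x⟩
  have hmem : ∀ i, (invFunOn f s)^[i] x ∈ s := fun i => hs.mapsTo_invFunOn.iterate i hx
  refine ⟨⟨fun i => (invFunOn f s)^[i] x, fun i => ?_⟩, rfl, hmem⟩
  change f ((invFunOn f s)^[i + 1] x) = _
  rw [iterate_succ_apply']
  exact hs.rightInvOn_invFunOn (hmem i)

theorem invDist_le_of_forall_lt [MetricSpace X] (hdiam : ∀ x y : X, dist x y ≤ 1)
    {x y : InvLim f} {N : ℕ} {c : ℝ} (hc : 0 ≤ c) (h : ∀ i < N, dist (x.1 i) (y.1 i) ≤ c) :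
    invDist x y ≤ 2 * c + 2 * 2⁻¹ ^ N := by
  have hgeom : Summable fun i : ℕ => (2⁻¹ : ℝ) ^ i :=
    summable_geometric_of_lt_one (by norm_num) (by norm_num)
  have htail : Summable fun i : ℕ => if N ≤ i then (2⁻¹ : ℝ) ^ i else 0 :=
    .of_nonneg_of_le (fun i => by split_ifs <;> positivity)
      (fun i => by split_ifs <;> first | exact le_rfl | positivity) hgeom
  set g : ℕ → ℝ := fun i => c * 2⁻¹ ^ i + if N ≤ i then 2⁻¹ ^ i else 0
  have hg : Summable g := (hgeom.mul_left c).add htail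
  have hle : ∀ i, dist (x.1 i) (y.1 i) / 2 ^ i ≤ g i := by
    intro i
    rw [div_eq_mul_inv, ← inv_pow]
    simp only [g]
    split_ifs with hi
    · nlinarith [hdiam (x.1 i) (y.1 i), pow_pos (inv_pos.2 (two_pos (α := ℝ))) i]
    · nlinarith [h i (by omega), pow_pos (inv_pos.2 (two_pos (α := ℝ))) i]
  calc invDist x y ≤ ∑' i, g i :=
        (Summable.of_nonneg_of_le (fun i => by positivity) hle hg).tsum_le_tsum hle hg
    _ = 2 * c + 2 * 2⁻¹ ^ N := by
      rw [(hgeom.mul_left c).tsum_add htail, tsum_mul_left, tsum_geometric_inv_two,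
        tsum_geometric_inv_two_ge, mul_comm c]

def IsShift (F : InvLim f → InvLim f) : Prop :=
  ∀ x : InvLim f, (F x).1 0 = f (x.1 0) ∧ ∀ i, (F x).1 (i + 1) = x.1 i

variable {F : InvLim f → InvLim f}

theorem IsShift.iterate_apply (hF : IsShift F) (x : InvLim f) {s i N : ℕ} (h : i ≤ s + N) :
    (F^[s] x).1 i = f^[N + s - i] (x.1 N) := by
  induction s generalizing i with
  | zero =>
    obtain ⟨k, rfl⟩ : ∃ k, N = i + k := ⟨N - i, by omega⟩
    rw [iterate_zero_apply, show i + k + 0 - i = k by omega]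
    exact (x.iterate_apply_add i k).symm
  | succ s ih =>
    rw [iterate_succ_apply']
    cases i with
    | zero =>
      rw [(hF _).1, ih (by omega), ← iterate_succ_apply' f]
      congr 1
    | succ j =>
      rw [(hF _).2, ih (by omega)]
      congr 1
      omega

theorem IsShift.isPeriodicPt (hF : IsShift F) {x : InvLim f} {q : ℕ}
    (h : ∀ i, IsPeriodicPt f q (x.1 i)) : IsPeriodicPt F q x :=
  Subtype.ext <| funext fun i => by
    rw [hF.iterate_apply x (N := i) (by omega), add_tsub_cancel_left]
    exact h i

theorem IsShift.invDist_iterate_le [MetricSpace X] (hF : IsShift F)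
    (hdiam : ∀ x y : X, dist x y ≤ 1) {N a b t : ℕ} {δ : ℝ} {y p : InvLim f}
    (hy : ∀ t, a ≤ t → t ≤ b + N → dist (f^[t] (y.1 N)) (f^[t - a] (p.1 N)) ≤ δ)
    (hat : a ≤ t) (htb : t ≤ b) :
    invDist (F^[t] y) (F^[t - a] p) ≤ 2 * δ + 2 * 2⁻¹ ^ N := by
  refine invDist_le_of_forall_lt hdiam (dist_nonneg.trans (hy a le_rfl (by omega))) ?_
  intro i hi
  rw [hF.iterate_apply y (N := N) (by omega), hF.iterate_apply p (N := N) (by omega)]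
  rw [show N + (t - a) - i = N + t - i - a by omega]
  exact hy (N + t - i) (by omega) (by omega)

end InvLim

theorem shift_specification_general {Λ : Type*} [MetricSpace Λ]
    (f : Λ → Λ) (hsurj : Function.Surjective f)
    (hdiam : ∀ x y : Λ, dist x y ≤ 1)
    (F : InvLim f → InvLim f)
    (hF : ∀ x : InvLim f, ((F x).1 0 = f (x.1 0)) ∧ ∀ i : ℕ, (F x).1 (i + 1) = x.1 i)
    (hspec : HasSpecification (fun x y : Λ => dist x y) f) :
    HasSpecification (fun x y : InvLim f => invDist x y) F := by
  replace hF : InvLim.IsShift F := hF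
  intro ε hε
  obtain ⟨N, hN⟩ := exists_pow_lt_of_lt_one (by positivity : 0 < ε / 4)
    (by norm_num : (2⁻¹ : ℝ) < 1)
  obtain ⟨M, hM⟩ := hspec (ε / 4) (by positivity)
  -- the extra `1` only makes the admissible periods positive
  refine ⟨M + N + 1, fun m a b P hab hgap => ?_⟩
  obtain ⟨⟨x, hx⟩, hper⟩ := hM m a (fun j => b j + N) (fun j => (P j).1 N)
    (fun j => (hab j).trans (Nat.le_add_right _ _)) (fun j => by have := hgap j; omega)
  have shadows : ∀ z : InvLim f, (∀ j t, a j ≤ t → t ≤ b j + N →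
      dist (f^[t] (z.1 0)) (f^[t - a j] ((P j).1 N)) < ε / 4) →
      ∀ j t, a j ≤ t → t ≤ b j → invDist (F^[t] (F^[N] z)) (F^[t - a j] (P j)) < ε := by
    intro z hz j t hat htb
    have hzN : (F^[N] z).1 N = z.1 0 := by
      simpa using hF.iterate_apply z (s := N) (i := N) (N := 0) (by omega)
    have := hF.invDist_iterate_le hdiam (fun t h1 h2 => hzN ▸ (hz j t h1 h2).le) hat htb
    linarith
  refine ⟨?_, fun q hq => ?_⟩
  · obtain ⟨z, hz0, -⟩ := InvLim.exists_of_surjOn (surjOn_univ.2 hsurj) (mem_univ x)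
    exact ⟨F^[N] z, shadows z (hz0 ▸ hx)⟩
  · obtain ⟨x, hxq, hx⟩ := hper q (by omega)
    obtain ⟨z, hz0, hzq⟩ :=
      InvLim.exists_of_surjOn (bijOn_ptsOfPeriod f (by omega : 0 < q)).surjOn hxq
    exact ⟨F^[N] z, (hF.isPeriodicPt hzq).apply_iterate N, shadows z (hz0 ▸ hx)⟩

/-- if a continuous surjection `f` of a compact metric space `Λ` (of diameter
at most 1) has the specification property, then the shift homeomorphism `f̂` on the inverse
limit `Λ̂` (with the metric `d(x̂,ŷ) = Σ_i d(x₋i,y₋i)/2^i`) also has the specification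
property. -/
theorem shift_specification {Λ : Type*} [MetricSpace Λ] [CompactSpace Λ]
    (f : Λ → Λ) (hf : Continuous f) (hsurj : Function.Surjective f)
    (hdiam : ∀ x y : Λ, dist x y ≤ 1)
    (F : InvLim f → InvLim f)
    (hF : ∀ x : InvLim f, ((F x).1 0 = f (x.1 0)) ∧ ∀ i : ℕ, (F x).1 (i + 1) = x.1 i)
    (hspec : HasSpecification (fun x y : Λ => dist x y) f) :
    HasSpecification (fun x y : InvLim f => invDist x y) F :=
  shift_specification_general f hsurj hdiam F hF hspec
end

section
/- For the logistic map F_ν(x) = νx(1−x) with ν > 2 + √5, the invariant set Λ_ν = ∩_{n≥0} F_ν^{-n}([0,1]) is a nonempty compact set on which |F_ν'(x)| > 1 for all x ∈ Λ_ν (F_ν is expanding on Λ_ν in the Euclidean metric). -/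
/-!
The set `Λ_ν` is cut out of `[0,1]` by the closed conditions `F^[n] x ∈ [0,1]`, so it is
compact; it contains the fixed point `0` and is invariant by construction. Expansion comes from
the identity `F'(x)² = ν² - 4ν F(x)`: on `Λ_ν` we have `F(x) ≤ 1`, hence
`|F'(x)| ≥ √(ν² - 4ν)`, and `ν² - 4ν > 1` exactly when `ν > 2 + √5`.
-/

open Function Set

section IterateMem

variable {α : Type*} {f : α → α} {s : Set α}

theorem mem_setOf_forall_iterate_mem_of_isFixedPt {x : α} (hx : IsFixedPt f x) (hs : x ∈ s) :
    x ∈ {x | x ∈ s ∧ ∀ n : ℕ, f^[n] x ∈ s} :=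
  ⟨hs, fun n => by rwa [(hx.iterate n).eq]⟩

theorem mapsTo_setOf_forall_iterate_mem :
    MapsTo f {x | x ∈ s ∧ ∀ n : ℕ, f^[n] x ∈ s} {x | x ∈ s ∧ ∀ n : ℕ, f^[n] x ∈ s} :=
  fun _ hx => ⟨hx.2 1, fun n => iterate_succ_apply f n _ ▸ hx.2 (n + 1)⟩

theorem IsCompact.setOf_forall_iterate_mem [TopologicalSpace α] [T2Space α]
    (hs : IsCompact s) (hf : Continuous f) : IsCompact {x | x ∈ s ∧ ∀ n : ℕ, f^[n] x ∈ s} := by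
  have hΛ : {x | x ∈ s ∧ ∀ n : ℕ, f^[n] x ∈ s} = s ∩ ⋂ n : ℕ, f^[n] ⁻¹' s := by
    ext x
    simp only [mem_ofPred_eq, mem_inter_iff, mem_iInter, mem_preimage]
  rw [hΛ]
  exact hs.inter_right (isClosed_iInter fun n => hs.isClosed.preimage (hf.iterate n))

end IterateMem

theorem hasDerivAt_logistic (ν x : ℝ) :
    HasDerivAt (fun x => ν * x * (1 - x)) (ν * (1 - 2 * x)) x :=
  (((hasDerivAt_id' x).const_mul ν).mul
    ((hasDerivAt_const x 1).sub (hasDerivAt_id' x))).congr_deriv (by simp only [Pi.sub_apply]; ring)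

theorem deriv_logistic_sq (ν x : ℝ) :
    deriv (fun x => ν * x * (1 - x)) x ^ 2 = ν ^ 2 - 4 * ν * (ν * x * (1 - x)) := by
  rw [(hasDerivAt_logistic ν x).deriv]
  ring

theorem sqrt_le_abs_deriv_logistic {ν x : ℝ} (hν : 0 ≤ ν) (hx : ν * x * (1 - x) ≤ 1) :
    √(ν ^ 2 - 4 * ν) ≤ |deriv (fun x => ν * x * (1 - x)) x| := by
  rw [← Real.sqrt_sq_eq_abs, deriv_logistic_sq]
  exact Real.sqrt_le_sqrt (by nlinarith)

theorem one_lt_sq_sub_four_mul {ν : ℝ} (hν : 2 + √5 < ν) : 1 < ν ^ 2 - 4 * ν := by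
  have h5 : √5 ^ 2 = 5 := Real.sq_sqrt (by norm_num)
  nlinarith [Real.sqrt_nonneg 5]

/-- for the logistic map `F_ν(x) = νx(1−x)` with `ν > 2 + √5`, the set
`Λ_ν = {x ∈ [0,1] : F_ν^n(x) ∈ [0,1] ∀ n}` is a nonempty compact `F_ν`-invariant set on
which `F_ν` is expanding in the Euclidean metric: `inf_{Λ_ν} |F_ν'| > 1`. -/
theorem logistic_expanding (ν : ℝ) (hν : 2 + Real.sqrt 5 < ν) :
    let F : ℝ → ℝ := fun x => ν * x * (1 - x)
    let Λ : Set ℝ := {x | x ∈ Set.Icc (0 : ℝ) 1 ∧ ∀ n : ℕ, F^[n] x ∈ Set.Icc (0 : ℝ) 1}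
    Λ.Nonempty ∧ IsCompact Λ ∧ Set.MapsTo F Λ Λ ∧
      ∃ c > (1 : ℝ), ∀ x ∈ Λ, c ≤ |deriv F x| := by
  intro F Λ
  have hν0 : 0 ≤ ν := by linarith [Real.sqrt_nonneg 5]
  have hF : Continuous F := by fun_prop
  have hfix : IsFixedPt F 0 := by simp [IsFixedPt, F]
  refine ⟨⟨0, mem_setOf_forall_iterate_mem_of_isFixedPt hfix (by simp)⟩,
    isCompact_Icc.setOf_forall_iterate_mem hF, mapsTo_setOf_forall_iterate_mem,
    √(ν ^ 2 - 4 * ν), ?_, fun x hx => sqrt_le_abs_deriv_logistic hν0 (hx.2 1).2⟩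
  rw [gt_iff_lt, Real.lt_sqrt zero_le_one, one_pow]
  exact one_lt_sq_sub_four_mul hν
end
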